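/- If p, q are coprime polynomials of degree d (d odd) such that the rational map t ↦ p(t)/q(t) commutes with the antipodal map z ↦ -1/z̄ on ℂP¹, then p = -λ·τ(q) for some λ ∈ ℂ with |λ| = 1, where τ(q)(t) = (-t)^d · conj(q(-1/t̄)); after rescaling p, q one may assume p = -τ(q). -/

import Mathlib

open Polynomial

/-- The "quaternionic structure" map on polynomials of degree ≤ k:
`tau k f = (-t)^k ⬝ conj (f (-1/t̄))`, i.e. `(tau k f).coeff i = (-1)^(k-i) conj (f.coeff (k-i))`. -/
noncomputable def tau (k : ℕ) (f : Polynomial ℂ) : Polynomial ℂ :=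
  ∑ i ∈ Finset.range (k + 1), C ((-1 : ℂ) ^ (k - i) * (starRingEnd ℂ) (f.coeff (k - i))) * X ^ i

/-! Coprimality and `τ p · p = -τ q · q` force `q ∣ τ p`; since `deg τ p ≤ d = deg q`,
`τ p = c · q` for a constant `c`, and then `τ q = -c · p`. As `τ ∘ τ = -1` in odd degree,
applying `τ` to `τ p = c · q` gives `c̄ c = 1`, so `λ = c̄` works. For the rescaling, a square
root `μ` of `λ̄` satisfies `μ λ = μ̄`. -/

lemma coeff_tau (k : ℕ) (f : ℂ[X]) (n : ℕ) :
    (tau k f).coeff n =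
      if n ≤ k then (-1 : ℂ) ^ (k - n) * starRingEnd ℂ (f.coeff (k - n)) else 0 := by
  simp only [tau, finsetSum_coeff, coeff_C_mul, coeff_X_pow, mul_ite, mul_one, mul_zero,
    Finset.sum_ite_eq, Finset.mem_range, Nat.lt_succ_iff]

lemma natDegree_tau_le (k : ℕ) (f : ℂ[X]) : (tau k f).natDegree ≤ k :=
  natDegree_le_iff_coeff_eq_zero.mpr fun n hn => by simp [coeff_tau, Nat.not_le.mpr hn]

lemma tau_C_mul (k : ℕ) (a : ℂ) (f : ℂ[X]) :
    tau k (C a * f) = C (starRingEnd ℂ a) * tau k f := by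
  ext n
  simp only [coeff_C_mul, coeff_tau, map_mul]
  split_ifs <;> ring

lemma tau_tau (k : ℕ) {f : ℂ[X]} (hf : f.natDegree ≤ k) : tau k (tau k f) = (-1) ^ k * f := by
  ext n
  rw [coeff_tau, ← C_1, ← C_neg, ← C_pow, coeff_C_mul]
  split_ifs with hn
  · rw [coeff_tau, if_pos (Nat.sub_le k n), Nat.sub_sub_self hn, map_mul, map_pow, map_neg,
      map_one, Complex.conj_conj, ← mul_assoc, ← pow_add, Nat.sub_add_cancel hn]
  · rw [coeff_eq_zero_of_natDegree_lt (hf.trans_lt (Nat.lt_of_not_le hn)), mul_zero]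

lemma exists_eq_C_mul_of_dvd_of_natDegree_le {R : Type*} [CommRing R] [NoZeroDivisors R]
    {f g : R[X]} (hg : g ≠ 0) (hdvd : g ∣ f) (hdeg : f.natDegree ≤ g.natDegree) :
    ∃ c, f = C c * g := by
  obtain ⟨s, rfl⟩ := hdvd
  rcases eq_or_ne s 0 with rfl | hs
  · exact ⟨0, by simp⟩
  rw [natDegree_mul hg hs] at hdeg
  exact ⟨s.coeff 0, by rw [mul_comm, ← eq_C_of_natDegree_eq_zero (by omega)]⟩

lemma exists_mul_eq_conj_of_norm_eq_one {lam : ℂ} (hlam : ‖lam‖ = 1) :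
    ∃ μ : ℂ, μ ≠ 0 ∧ μ * lam = starRingEnd ℂ μ := by
  obtain ⟨μ, hμ⟩ := IsAlgClosed.exists_pow_nat_eq (starRingEnd ℂ lam) two_pos
  have hμ0 : μ ≠ 0 := by
    rintro rfl
    rw [zero_pow two_ne_zero, eq_comm, map_eq_zero] at hμ
    simp [hμ] at hlam
  have hnorm : ‖μ‖ = 1 := by
    rw [← pow_left_inj₀ (norm_nonneg μ) zero_le_one two_ne_zero, ← norm_pow, hμ,
      Complex.norm_conj, hlam, one_pow]
  refine ⟨μ, hμ0, mul_right_cancel₀ hμ0 ?_⟩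
  calc μ * lam * μ = starRingEnd ℂ lam * lam := by rw [← hμ]; ring
    _ = starRingEnd ℂ μ * μ := by rw [Complex.conj_mul', Complex.conj_mul', hlam, hnorm]

/-- If `p, q` are coprime polynomials of degree `d` (`d` odd) such that the rational map
`t ↦ p(t)/q(t)` commutes with the antipodal map `z ↦ -1/z̄` (equivalently,
`tau d p ⬝ p + tau d q ⬝ q = 0`), then `p = -λ ⬝ tau d q` for some unimodular `λ`;
moreover after rescaling `p, q` by a suitable `μ ≠ 0` one has `p = -tau d q`. -/
theorem eq_neg_tau_of_commutes_with_antipodal (d : ℕ) (hd : Odd d) (p q : Polynomial ℂ)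
    (hp : p.natDegree = d) (hq : q.natDegree = d) (hcop : IsCoprime p q)
    (hcomm : tau d p * p + tau d q * q = 0) :
    (∃ lam : ℂ, ‖lam‖ = 1 ∧ p = -(C lam * tau d q)) ∧
      ∃ μ : ℂ, μ ≠ 0 ∧ C μ * p = -tau d (C μ * q) := by
  have hp0 : p ≠ 0 := ne_zero_of_natDegree_gt (hp ▸ hd.pos)
  have hq0 : q ≠ 0 := ne_zero_of_natDegree_gt (hq ▸ hd.pos)
  have hq_dvd : q ∣ tau d p :=
    hcop.symm.dvd_of_dvd_mul_right ⟨-tau d q, by linear_combination hcomm⟩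
  obtain ⟨c, hc⟩ :=
    exists_eq_C_mul_of_dvd_of_natDegree_le hq0 hq_dvd (hq ▸ natDegree_tau_le d p)
  have htq : tau d q = -(C c * p) := by
    refine eq_neg_of_add_eq_zero_left (mul_left_cancel₀ hq0 ?_)
    linear_combination hcomm - p * hc
  have hcc : starRingEnd ℂ c * c = 1 := by
    have h := congrArg (tau d) hc
    rw [tau_tau d hp.le, hd.neg_one_pow, tau_C_mul, htq] at h
    refine C_injective (mul_right_cancel₀ hp0 ?_)
    rw [C_mul, C_1]
    linear_combination h
  have hlam : ∃ lam : ℂ, ‖lam‖ = 1 ∧ p = -(C lam * tau d q) := by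
    refine ⟨starRingEnd ℂ c, ?_, ?_⟩
    · rw [Complex.norm_conj, ← pow_eq_one_iff_of_nonneg (norm_nonneg c) two_ne_zero]
      exact_mod_cast (Complex.conj_mul' c).symm.trans hcc
    · rw [htq, mul_neg, neg_neg, ← mul_assoc, ← C_mul, hcc, C_1, one_mul]
  refine ⟨hlam, ?_⟩
  obtain ⟨lam, hlam1, hplam⟩ := hlam
  obtain ⟨μ, hμ0, hμ⟩ := exists_mul_eq_conj_of_norm_eq_one hlam1
  refine ⟨μ, hμ0, ?_⟩
  rw [tau_C_mul, ← hμ, hplam, C_mul]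
  ring
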